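/- For 0 ≤ p < ∞, α ∈ (0,1), and a traded asset S = (S_0, S_T) with S_T ∈ L^p_+ nonzero, the Value-at-Risk based risk measure ρ_{A_α,S}(X) = inf{m : P(X + (m/S_0) S_T < 0) ≤ α} is finitely valued on L^p if and only if P(S_T = 0) < min{α, 1 − α}; moreover ρ_{A_α,S} is never continuous on all of L^p. -/

import Mathlib

open MeasureTheory Filter Topology ENNReal

variable {Ω : Type*} [MeasureSpace Ω] [IsProbabilityMeasure (volume : Measure Ω)]

/-- The Value-at-Risk acceptance set at level α in Lᵖ. -/
def varAcc (p : ℝ≥0∞) (α : ℝ) : Set (Lp ℝ p (volume : Measure Ω)) :=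
  {f | volume {ω | f ω < 0} ≤ ENNReal.ofReal α}

/-- The risk measure ρ_{A,S} with eligible asset S = (S₀, S_T). -/
noncomputable def rho (p : ℝ≥0∞) [Fact (1 ≤ p)] (A : Set (Lp ℝ p (volume : Measure Ω)))
    (S0 : ℝ) (ST : Lp ℝ p (volume : Measure Ω)) (x : Lp ℝ p (volume : Measure Ω)) : EReal :=
  sInf ((fun r : ℝ => (r : EReal)) '' {r : ℝ | x + (r / S0) • ST ∈ A})

/-!
Write `Z = {S_T = 0}` and `Z⁺ = {S_T > 0}`, so that `P(Z) + P(Z⁺) = 1`. If `P(Z) < α`, the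
probability that `X + m S_T` is negative falls below `α` as `m → ∞` (continuity from above),
so `ρ(X) < ∞`; if `α < P(Z⁺)` it stays above `α` as `m → -∞`, so `ρ(X) > -∞`. Conversely, if
`P(Z⁺) ≤ α` every `m` is acceptable for `X = 0`, and if `α ≤ P(Z)` the position
`-1 - Σ 2ⁿ 1_{Tₙ} S_T`, where `Tₙ ⊆ Z⁺` have positive probability and `‖1_{Tₙ} S_T‖_p ≤ 4⁻ⁿ`
(they exist by nonatomicity), is acceptable for no `m`.

For the discontinuity: if `P(Z⁺) ≤ α` then `ρ(0) = -∞` while small negative constants have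
`ρ ≥ 0`. Otherwise pick `A ⊆ Z⁺` with `P(A) = α` exactly (Sierpiński's theorem for nonatomic
measures) and `B ⊆ Z⁺ \ A` of small positive probability: `ρ(-1_A S_T) ≤ 0` but
`ρ(-1_{A ∪ B} S_T) ≥ S_0`, while the two positions are arbitrarily close in `Lᵖ`.
-/

theorem ENNReal.exists_mem_forall_le_two_mul {β : Type*} {f : β → ℝ≥0∞} {S : Set β}
    (hS : S.Nonempty) (hbdd : ⨆ v ∈ S, f v ≠ ∞) : ∃ u ∈ S, ∀ v ∈ S, f v ≤ 2 * f u := by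
  set σ := ⨆ v ∈ S, f v
  rcases eq_or_ne σ 0 with hσ | hσ
  · obtain ⟨u, hu⟩ := hS
    exact ⟨u, hu, fun v hv => (le_biSup f hv).trans (hσ.le.trans zero_le)⟩
  obtain ⟨u, hu, hlt⟩ := lt_biSup_iff.mp (ENNReal.half_lt_self hσ hbdd)
  refine ⟨u, hu, fun v hv => (le_biSup f hv).trans ?_⟩
  calc σ = 2 * (σ / 2) := (ENNReal.mul_div_cancel two_ne_zero ofNat_ne_top).symm
    _ ≤ 2 * f u := by gcongr

namespace MeasureTheory.Measure

variable {Ω : Type*} [MeasurableSpace Ω]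

def IsNonatomic (μ : Measure Ω) : Prop :=
  ∀ s, MeasurableSet s → 0 < μ s → ∃ t ⊆ s, MeasurableSet t ∧ 0 < μ t ∧ μ t < μ s

namespace IsNonatomic

variable {μ : Measure Ω} [IsFiniteMeasure μ] {s : Set Ω}

theorem exists_subset_measure_pos_le_half (hμ : μ.IsNonatomic) (hs : MeasurableSet s)
    (hμs : 0 < μ s) : ∃ t ⊆ s, MeasurableSet t ∧ 0 < μ t ∧ μ t ≤ μ s / 2 := by
  obtain ⟨t, hts, ht, ht0, hlt⟩ := hμ s hs hμs
  by_cases hhalf : μ t ≤ μ s / 2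
  · exact ⟨t, hts, ht, ht0, hhalf⟩
  have hsum : μ t + μ (s \ t) = μ s := by
    rw [measure_add_sdiff ht.nullMeasurableSet, Set.union_eq_right.mpr hts]
  refine ⟨s \ t, Set.sdiff_subset, hs.diff ht, ?_, ?_⟩
  · rw [measure_sdiff hts ht.nullMeasurableSet (measure_ne_top μ t)]
    exact tsub_pos_of_lt hlt
  · refine le_of_not_gt fun hgt => (ENNReal.add_lt_add (not_le.mp hhalf) hgt).ne ?_
    rw [ENNReal.add_halves, hsum]

theorem exists_subset_measure_pos_le (hμ : μ.IsNonatomic) (hs : MeasurableSet s)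
    (hμs : 0 < μ s) {ε : ℝ≥0∞} (hε : ε ≠ 0) :
    ∃ t ⊆ s, MeasurableSet t ∧ 0 < μ t ∧ μ t ≤ ε := by
  have hpow : ∀ n : ℕ, ∃ t ⊆ s, MeasurableSet t ∧ 0 < μ t ∧ μ t ≤ μ s * 2⁻¹ ^ n := by
    intro n
    induction n with
    | zero => exact ⟨s, subset_rfl, hs, hμs, by simp⟩
    | succ n ih =>
      obtain ⟨t, hts, ht, ht0, hle⟩ := ih
      obtain ⟨t', ht't, ht', ht'0, hle'⟩ := hμ.exists_subset_measure_pos_le_half ht ht0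
      refine ⟨t', ht't.trans hts, ht', ht'0, ?_⟩
      calc μ t' ≤ μ t / 2 := hle'
        _ ≤ μ s * 2⁻¹ ^ n / 2 := by gcongr
        _ = μ s * 2⁻¹ ^ (n + 1) := by rw [pow_succ, div_eq_mul_inv, mul_assoc]
  have hlim : Tendsto (fun n : ℕ => μ s * 2⁻¹ ^ n) atTop (𝓝 0) := by
    simpa using ENNReal.Tendsto.const_mul
      (ENNReal.tendsto_pow_atTop_nhds_zero_iff.mpr (by norm_num)) (Or.inr (measure_ne_top μ s))
  obtain ⟨n, hn⟩ := (hlim.eventually (gt_mem_nhds (pos_iff_ne_zero.mpr hε))).exists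
  obtain ⟨t, hts, ht, ht0, hle⟩ := hpow n
  exact ⟨t, hts, ht, ht0, hle.trans hn.le⟩

theorem exists_subset_measure_eq (hμ : μ.IsNonatomic) (hs : MeasurableSet s) {c : ℝ≥0∞}
    (hc : c ≤ μ s) : ∃ t ⊆ s, MeasurableSet t ∧ μ t = c := by
  have hc_top : c ≠ ∞ := ne_top_of_le_ne_top (measure_ne_top μ s) hc
  -- Greedy exhaustion: each step adds an admissible set of at least half the largest
  -- admissible measure.
  let adm (t : Set Ω) : Set (Set Ω) := {u | MeasurableSet u ∧ u ⊆ s \ t ∧ μ u ≤ c - μ t}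
  have hgreedy : ∀ t, ∃ u ∈ adm t, ∀ v ∈ adm t, μ v ≤ 2 * μ u := fun t =>
    ENNReal.exists_mem_forall_le_two_mul ⟨∅, .empty, Set.empty_subset _, by simp⟩
      (ne_top_of_le_ne_top hc_top (iSup₂_le fun v hv => hv.2.2.trans tsub_le_self))
  choose U hU hUmax using hgreedy
  let A : ℕ → Set Ω := fun n => (fun t => t ∪ U t)^[n] ∅
  have hA_succ (n : ℕ) : A (n + 1) = A n ∪ U (A n) := Function.iterate_succ_apply' _ n ∅
  have hA_disj (n : ℕ) : Disjoint (A n) (U (A n)) :=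
    (Set.subset_sdiff.mp (hU (A n)).2.1).2.symm
  have hA (n : ℕ) : MeasurableSet (A n) ∧ A n ⊆ s ∧ μ (A n) ≤ c := by
    induction n with
    | zero => simp [A]
    | succ n ih =>
      obtain ⟨hUm, hUs, hUc⟩ := hU (A n)
      rw [hA_succ, measure_union (hA_disj n) hUm]
      exact ⟨ih.1.union hUm, Set.union_subset ih.2.1 (hUs.trans Set.sdiff_subset),
        (add_le_add_right hUc _).trans (add_tsub_cancel_of_le ih.2.2).le⟩
  have hA_mono : Monotone A := monotone_nat_of_le_succ fun n => by
    rw [hA_succ]; exact Set.subset_union_left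
  set T := ⋃ n, A n
  have hT : MeasurableSet T := .iUnion fun n => (hA n).1
  have hTs : T ⊆ s := Set.iUnion_subset fun n => (hA n).2.1
  have hTc : μ T ≤ c := by
    rw [hA_mono.measure_iUnion]; exact iSup_le fun n => (hA n).2.2
  refine ⟨T, hTs, hT, hTc.antisymm (not_lt.mp fun hlt => ?_)⟩
  -- A leftover piece `u` of `s \ T` stays admissible, so every step adds at least `μ u / 2`.
  have hgap : 0 < c - μ T := tsub_pos_of_lt hlt
  have hsT : 0 < μ (s \ T) := by
    rw [measure_sdiff hTs hT.nullMeasurableSet (measure_ne_top μ T)]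
    exact hgap.trans_le (tsub_le_tsub_right hc _)
  obtain ⟨u, hus, hu, hu0, huc⟩ := hμ.exists_subset_measure_pos_le (hs.diff hT) hsT hgap.ne'
  have hu_adm (n : ℕ) : u ∈ adm (A n) :=
    ⟨hu, hus.trans (Set.sdiff_subset_sdiff_right (Set.subset_iUnion A n)),
      huc.trans (tsub_le_tsub_left (measure_mono (Set.subset_iUnion A n)) c)⟩
  have hgrowth (n : ℕ) : n * μ u ≤ 2 * μ (A n) := by
    induction n with
    | zero => simp
    | succ n ih =>
      rw [hA_succ, measure_union (hA_disj n) (hU (A n)).1, mul_add, Nat.cast_succ, add_mul,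
        one_mul]
      exact add_le_add ih (hUmax _ _ (hu_adm n))
  obtain ⟨n, hn⟩ := ENNReal.exists_nat_mul_gt hu0.ne' (mul_ne_top (ofNat_ne_top (n := 2)) hc_top)
  exact (hn.trans_le (hgrowth n)).not_ge (by gcongr; exact (hA n).2.2)

theorem exists_subset_eLpNorm_indicator_le {E : Type*} [NormedAddCommGroup E]
    (hμ : μ.IsNonatomic) {p : ℝ≥0∞} (hp1 : 1 ≤ p) (hp : p ≠ ∞) {f : Ω → E} (hf : MemLp f p μ)
    (hs : MeasurableSet s) (hμs : 0 < μ s) {ε : ℝ} (hε : 0 < ε) :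
    ∃ t ⊆ s, MeasurableSet t ∧ 0 < μ t ∧ eLpNorm (t.indicator f) p μ ≤ ENNReal.ofReal ε := by
  obtain ⟨δ, hδ, hsmall⟩ := hf.eLpNorm_indicator_le hp1 hp hε
  obtain ⟨t, hts, ht, ht0, htδ⟩ :=
    hμ.exists_subset_measure_pos_le hs hμs (ENNReal.ofReal_pos.mpr hδ).ne'
  exact ⟨t, hts, ht, ht0, hsmall t ht htδ⟩

end IsNonatomic

end MeasureTheory.Measure

section Shortfall

variable {Ω : Type*} [MeasurableSpace Ω] {μ : Measure Ω} {f s : Ω → ℝ} {a : ℝ≥0∞}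

theorem measure_eq_zero_add_measure_pos (hs : Measurable s) (hs0 : 0 ≤ᵐ[μ] s) :
    μ {ω | s ω = 0} + μ {ω | 0 < s ω} = μ Set.univ := by
  have hpos : {ω | 0 < s ω} =ᵐ[μ] {ω | s ω = 0}ᶜ := by
    filter_upwards [hs0] with ω hω
    simp only [eq_iff_iff]
    exact ⟨ne_of_gt, fun h => lt_of_le_of_ne hω (Ne.symm h)⟩
  rw [measure_congr hpos]
  exact measure_add_measure_compl (hs (measurableSet_singleton 0))

theorem exists_measure_add_mul_neg_le [IsFiniteMeasure μ] (hf : Measurable f)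
    (hs : Measurable s) (hs0 : 0 ≤ᵐ[μ] s) (h : μ {ω | s ω = 0} < a) :
    ∃ m : ℝ, μ {ω | f ω + m * s ω < 0} ≤ a := by
  let K (n : ℕ) : Set Ω := {ω | f ω + n * s ω < 0} ∩ {ω | 0 ≤ s ω}
  have hK_anti : Antitone K := fun m n hmn ω ⟨hω, hω0⟩ => by
    have : (m : ℝ) ≤ n := by exact_mod_cast hmn
    exact ⟨by simp only [Set.mem_ofPred_eq] at hω hω0 ⊢; nlinarith, hω0⟩
  have hK_inter : ⋂ n, K n ⊆ {ω | s ω = 0} := fun ω hω => by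
    have hω0 : 0 ≤ s ω := (Set.mem_iInter.mp hω 0).2
    refine le_antisymm (not_lt.mp fun hpos => ?_) hω0
    obtain ⟨n, hn⟩ := exists_nat_gt (-f ω / s ω)
    have hn' : f ω + n * s ω < 0 := (Set.mem_iInter.mp hω n).1
    rw [div_lt_iff₀ hpos] at hn
    linarith
  have hlim := tendsto_measure_iInter_atTop (μ := μ)
    (fun n => ((measurableSet_lt (hf.add (hs.const_mul _)) measurable_const).inter
      (measurableSet_le measurable_const hs)).nullMeasurableSet) hK_anti
    ⟨0, measure_ne_top μ _⟩
  obtain ⟨n, hn⟩ :=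
    (hlim.eventually (gt_mem_nhds ((measure_mono hK_inter).trans_lt h))).exists
  refine ⟨n, le_of_eq_of_le ?_ hn.le⟩
  exact (measure_inter_conull (ae_iff.mp hs0)).symm

theorem exists_forall_le_lt_measure_add_mul_neg (h : a < μ {ω | 0 < s ω}) :
    ∃ m₀ : ℝ, ∀ m ≤ m₀, a < μ {ω | f ω + m * s ω < 0} := by
  let K (n : ℕ) : Set Ω := {ω | f ω - n * s ω < 0} ∩ {ω | 0 < s ω}
  have hK_mono : Monotone K := fun m n hmn ω ⟨hω, hω0⟩ => by
    have : (m : ℝ) ≤ n := by exact_mod_cast hmn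
    exact ⟨by simp only [Set.mem_ofPred_eq] at hω hω0 ⊢; nlinarith, hω0⟩
  have hK_union : {ω | 0 < s ω} ⊆ ⋃ n, K n := fun ω hω => by
    obtain ⟨n, hn⟩ := exists_nat_gt (f ω / s ω)
    rw [div_lt_iff₀ hω] at hn
    exact Set.mem_iUnion.mpr ⟨n, by simp only [Set.mem_ofPred_eq]; linarith, hω⟩
  obtain ⟨n, hn⟩ := ((tendsto_measure_iUnion_atTop hK_mono).eventually
    (lt_mem_nhds (h.trans_le (measure_mono hK_union)))).exists
  refine ⟨-n, fun m hm => hn.trans_le (measure_mono fun ω ⟨hω, hω0⟩ => ?_)⟩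
  simp only [Set.mem_ofPred_eq] at hω hω0 ⊢
  nlinarith

theorem measure_add_mul_neg_le_measure_pos (hf : 0 ≤ᵐ[μ] f) (hs0 : 0 ≤ᵐ[μ] s) (m : ℝ) :
    μ {ω | f ω + m * s ω < 0} ≤ μ {ω | 0 < s ω} := by
  refine measure_mono_ae ?_
  filter_upwards [hf, hs0] with ω hfω hsω (hneg : f ω + m * s ω < 0)
  refine lt_of_le_of_ne hsω fun h0 => ?_
  rw [← h0, mul_zero, add_zero] at hneg
  exact hneg.not_ge hfω

end Shortfall

section Unbounded

variable {Ω : Type*} [MeasurableSpace Ω] {μ : Measure Ω} [IsFiniteMeasure μ]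
  {p : ℝ≥0∞} [Fact (1 ≤ p)]

theorem exists_nonneg_forall_exists_pow_mul_le (hμ : μ.IsNonatomic) (hp : p ≠ ∞)
    {s : Lp ℝ p μ} (hs : 0 ≤ s) (hpos : 0 < μ {ω | 0 < s ω}) :
    ∃ g : Lp ℝ p μ, 0 ≤ g ∧ ∀ n : ℕ, ∃ t ⊆ {ω | 0 < s ω}, MeasurableSet t ∧ 0 < μ t ∧
      ∀ᵐ ω ∂μ, ω ∈ t → 2 ^ n * s ω ≤ g ω := by
  have hPos : MeasurableSet {ω | 0 < s ω} :=
    measurableSet_lt measurable_const (Lp.stronglyMeasurable s).measurable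
  choose t hts ht ht0 hnorm using fun n : ℕ =>
    hμ.exists_subset_eLpNorm_indicator_le Fact.out hp (Lp.memLp s) hPos hpos
      (pow_pos (by norm_num : (0 : ℝ) < 4⁻¹) n)
  let v (n : ℕ) : Lp ℝ p μ := ((Lp.memLp s).indicator (ht n)).toLp _
  have hv_coe (n : ℕ) : v n =ᵐ[μ] (t n).indicator s := MemLp.coeFn_toLp _
  have hv_nonneg (n : ℕ) : 0 ≤ (2 : ℝ) ^ n • v n := by
    refine (Lp.coeFn_nonneg _).mp ?_
    filter_upwards [Lp.coeFn_smul ((2 : ℝ) ^ n) (v n), hv_coe n, (Lp.coeFn_nonneg s).mpr hs]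
      with ω hsmul hω hsω
    rw [hsmul, Pi.smul_apply, hω, smul_eq_mul]
    exact mul_nonneg (by positivity) (Set.indicator_nonneg (fun ω _ => hsω) ω)
  have hsum : Summable fun n : ℕ => (2 : ℝ) ^ n • v n := by
    refine Summable.of_norm_bounded (summable_geometric_of_lt_one (by norm_num)
      (by norm_num : (2⁻¹ : ℝ) < 1)) fun n => ?_
    calc ‖(2 : ℝ) ^ n • v n‖ = 2 ^ n * ‖v n‖ := by
          rw [norm_smul, Real.norm_of_nonneg (by positivity)]
      _ ≤ 2 ^ n * 4⁻¹ ^ n := by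
          gcongr
          rw [Lp.norm_toLp]
          exact ENNReal.toReal_le_of_le_ofReal (by positivity) (hnorm n)
      _ = 2⁻¹ ^ n := by rw [← mul_pow]; norm_num
  refine ⟨∑' n, (2 : ℝ) ^ n • v n, tsum_nonneg hv_nonneg, fun n => ⟨t n, hts n, ht n, ht0 n, ?_⟩⟩
  have hle := (Lp.coeFn_le _ _).mpr (hsum.le_tsum n fun j _ => hv_nonneg j)
  filter_upwards [hle, Lp.coeFn_smul ((2 : ℝ) ^ n) (v n), hv_coe n] with ω hω hsmul hvω hωt
  rw [hsmul, Pi.smul_apply, hvω, Set.indicator_of_mem hωt, smul_eq_mul] at hω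
  exact hω

theorem exists_forall_measure_eq_zero_lt_measure_add_mul_neg (hμ : μ.IsNonatomic) (hp : p ≠ ∞)
    {s : Lp ℝ p μ} (hs : 0 ≤ s) (hpos : 0 < μ {ω | 0 < s ω}) :
    ∃ x : Lp ℝ p μ, ∀ m : ℝ, μ {ω | s ω = 0} < μ {ω | x ω + m * s ω < 0} := by
  obtain ⟨g, hg, hgs⟩ := exists_nonneg_forall_exists_pow_mul_le hμ hp hs hpos
  refine ⟨Lp.const p μ (-1) - g, fun m => ?_⟩
  obtain ⟨n, hn⟩ := pow_unbounded_of_one_lt m (one_lt_two : (1 : ℝ) < 2)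
  obtain ⟨t, hts, ht, ht0, hgt⟩ := hgs n
  have hdisj : Disjoint {ω | s ω = 0} t :=
    Set.disjoint_left.mpr fun ω h0 hωt => (hts hωt).ne' h0
  calc μ {ω | s ω = 0} < μ {ω | s ω = 0} + μ t :=
        ENNReal.lt_add_right (measure_ne_top _ _) ht0.ne'
    _ = μ ({ω | s ω = 0} ∪ t) := (measure_union hdisj ht).symm
    _ ≤ _ := measure_mono_ae ?_
  filter_upwards [Lp.coeFn_sub (Lp.const p μ (-1)) g, Lp.coeFn_const p μ (-1 : ℝ),
    (Lp.coeFn_nonneg g).mpr hg, hgt] with ω hsub hconst (hg0 : (0 : ℝ) ≤ g ω) hgω hω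
  change ((Lp.const p μ (-1) - g : Lp ℝ p μ) : Ω → ℝ) ω + m * s ω < 0
  rw [hsub, Pi.sub_apply, hconst, Function.const_apply]
  rcases hω with h0 | hωt
  · rw [show s ω = 0 from h0]
    linarith
  · have h1 : 0 < s ω := hts hωt
    have h2 := hgω hωt
    nlinarith

end Unbounded

theorem not_continuousAt_of_forall_exists_dist_lt {M L : Type*} [PseudoMetricSpace M]
    [LinearOrder L] [TopologicalSpace L] [OrderTopology L] {f : M → L} {x : M} {c : L}
    (hx : f x < c) (h : ∀ ε > 0, ∃ y, dist y x < ε ∧ c ≤ f y) : ¬ ContinuousAt f x := by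
  intro hf
  obtain ⟨ε, hε, hball⟩ := Metric.eventually_nhds_iff.mp (hf.eventually (gt_mem_nhds hx))
  obtain ⟨y, hy, hcy⟩ := h ε hε
  exact (hball hy).not_ge hcy

section RiskMeasure

variable {Ω : Type*} [MeasureSpace Ω] {p : ℝ≥0∞} {α : ℝ}

theorem add_smul_mem_varAcc_iff (x y : Lp ℝ p (volume : Measure Ω)) (c : ℝ) :
    x + c • y ∈ varAcc p α ↔ volume {ω | x ω + c * y ω < 0} ≤ ENNReal.ofReal α := by
  have hae : {ω | (x + c • y : Lp ℝ p volume) ω < 0} =ᵐ[volume] {ω | x ω + c * y ω < 0} := by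
    filter_upwards [Lp.coeFn_add x (c • y), Lp.coeFn_smul c y] with ω hadd hsmul
    change ((x + c • y : Lp ℝ p volume) ω < 0) = (x ω + c * y ω < 0)
    rw [hadd, Pi.add_apply, hsmul, Pi.smul_apply, smul_eq_mul]
  change volume _ ≤ _ ↔ _
  rw [measure_congr hae]

variable [Fact (1 ≤ p)] {A : Set (Lp ℝ p (volume : Measure Ω))} {S0 : ℝ}
  {ST x : Lp ℝ p (volume : Measure Ω)}

theorem rho_le_of_mem {r : ℝ} (h : x + (r / S0) • ST ∈ A) : rho p A S0 ST x ≤ r :=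
  sInf_le ⟨r, h, rfl⟩

theorem le_rho_of_forall_mem {c : ℝ} (h : ∀ r, x + (r / S0) • ST ∈ A → c ≤ r) :
    (c : EReal) ≤ rho p A S0 ST x :=
  le_sInf <| by
    rintro _ ⟨r, hr, rfl⟩
    exact EReal.coe_le_coe_iff.mpr (h r hr)

theorem rho_eq_top_of_forall_notMem (h : ∀ r, x + (r / S0) • ST ∉ A) :
    rho p A S0 ST x = ⊤ := by
  have hempty : {r : ℝ | x + (r / S0) • ST ∈ A} = ∅ := Set.eq_empty_iff_forall_notMem.mpr h
  rw [rho, hempty, Set.image_empty, sInf_empty]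

theorem rho_eq_bot_of_forall_mem (h : ∀ r, x + (r / S0) • ST ∈ A) : rho p A S0 ST x = ⊥ :=
  (EReal.eq_bot_iff_forall_lt _).mpr fun c =>
    (rho_le_of_mem (h (c - 1))).trans_lt (EReal.coe_lt_coe_iff.mpr (sub_one_lt c))

theorem rho_varAcc_ne_top [IsFiniteMeasure (volume : Measure Ω)] (hS0 : 0 < S0) (hST : 0 ≤ ST)
    (h : volume {ω | ST ω = 0} < ENNReal.ofReal α) (x : Lp ℝ p (volume : Measure Ω)) :
    rho p (varAcc p α) S0 ST x ≠ ⊤ := by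
  obtain ⟨m, hm⟩ := exists_measure_add_mul_neg_le (Lp.stronglyMeasurable x).measurable
    (Lp.stronglyMeasurable ST).measurable ((Lp.coeFn_nonneg ST).mpr hST) h
  refine ne_top_of_le_ne_top (EReal.coe_ne_top (m * S0)) (rho_le_of_mem ?_)
  rwa [mul_div_cancel_right₀ m hS0.ne', add_smul_mem_varAcc_iff]

theorem rho_varAcc_ne_bot (hS0 : 0 < S0) (h : ENNReal.ofReal α < volume {ω | 0 < ST ω})
    (x : Lp ℝ p (volume : Measure Ω)) : rho p (varAcc p α) S0 ST x ≠ ⊥ := by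
  obtain ⟨m₀, hm₀⟩ := exists_forall_le_lt_measure_add_mul_neg (f := x) h
  refine ne_bot_of_le_ne_bot (EReal.coe_ne_bot (m₀ * S0)) (le_rho_of_forall_mem fun r hr => ?_)
  rw [add_smul_mem_varAcc_iff] at hr
  by_contra! hlt
  exact (hm₀ _ ((div_le_iff₀ hS0).mpr hlt.le)).not_ge hr

theorem rho_varAcc_eq_bot_of_nonneg (hST : 0 ≤ ST) (hx : 0 ≤ x)
    (h : volume {ω | 0 < ST ω} ≤ ENNReal.ofReal α) : rho p (varAcc p α) S0 ST x = ⊥ :=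
  rho_eq_bot_of_forall_mem fun _ => (add_smul_mem_varAcc_iff _ _ _).mpr <|
    (measure_add_mul_neg_le_measure_pos ((Lp.coeFn_nonneg x).mpr hx)
      ((Lp.coeFn_nonneg ST).mpr hST) _).trans h

theorem rho_varAcc_nonneg_of_neg [IsProbabilityMeasure (volume : Measure Ω)] (hα : α < 1)
    (hS0 : 0 < S0) (hST : 0 ≤ ST) (hx : ∀ᵐ ω, x ω < 0) : 0 ≤ rho p (varAcc p α) S0 ST x := by
  refine EReal.coe_zero ▸ le_rho_of_forall_mem fun r hr => not_lt.mp fun hr0 => ?_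
  rw [add_smul_mem_varAcc_iff] at hr
  refine hr.not_gt ((ENNReal.ofReal_lt_one.mpr hα).trans_le ?_)
  rw [← measure_univ (μ := (volume : Measure Ω))]
  refine measure_mono_ae ?_
  filter_upwards [hx, (Lp.coeFn_nonneg ST).mpr hST] with ω hxω (hSTω : 0 ≤ ST ω) _
  change x ω + r / S0 * ST ω < 0
  nlinarith [div_neg_of_neg_of_pos hr0 hS0]

theorem exists_rho_varAcc_eq_top [IsProbabilityMeasure (volume : Measure Ω)]
    (hna : (volume : Measure Ω).IsNonatomic) (hp : p ≠ ∞) (hα : α < 1) (hST : 0 ≤ ST)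
    (h : ENNReal.ofReal α ≤ volume {ω | ST ω = 0}) :
    ∃ x, rho p (varAcc p α) S0 ST x = ⊤ := by
  rcases h.lt_or_eq with hlt | heq
  · refine ⟨Lp.const p volume (-1), rho_eq_top_of_forall_notMem fun r hr => ?_⟩
    rw [add_smul_mem_varAcc_iff] at hr
    refine hr.not_gt (hlt.trans_le (measure_mono_ae ?_))
    filter_upwards [Lp.coeFn_const p volume (-1 : ℝ)] with ω hω (h0 : ST ω = 0)
    change (Lp.const p volume (-1) : Ω → ℝ) ω + r / S0 * ST ω < 0
    rw [hω, h0, Function.const_apply]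
    norm_num
  · have hpos : 0 < volume {ω | 0 < ST ω} := by
      have hsplit := measure_eq_zero_add_measure_pos (Lp.stronglyMeasurable ST).measurable
        ((Lp.coeFn_nonneg ST).mpr hST)
      refine pos_iff_ne_zero.mpr fun h0 => ?_
      rw [h0, add_zero, measure_univ, ← heq] at hsplit
      exact (ENNReal.ofReal_lt_one.mpr hα).ne hsplit
    obtain ⟨x, hx⟩ := exists_forall_measure_eq_zero_lt_measure_add_mul_neg hna hp hST hpos
    exact ⟨x, rho_eq_top_of_forall_notMem fun r hr =>
      ((add_smul_mem_varAcc_iff _ _ _).mp hr).not_gt (heq ▸ hx _)⟩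

theorem rho_varAcc_le_zero_of_ae_eq_neg_indicator {A : Set Ω}
    (hx : x =ᵐ[volume] -A.indicator ST) (hA : volume A ≤ ENNReal.ofReal α) :
    rho p (varAcc p α) S0 ST x ≤ 0 := by
  refine EReal.coe_zero ▸ rho_le_of_mem ?_
  rw [zero_div, add_smul_mem_varAcc_iff]
  refine (measure_mono_ae ?_).trans hA
  filter_upwards [hx] with ω hω (hneg : x ω + 0 * ST ω < 0)
  by_contra hωA
  rw [zero_mul, add_zero, hω, Pi.neg_apply, Set.indicator_of_notMem hωA, neg_zero] at hneg
  exact lt_irrefl _ hneg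

theorem le_rho_varAcc_of_ae_eq_neg_indicator (hS0 : 0 < S0) {A : Set Ω}
    (hAST : A ⊆ {ω | 0 < ST ω}) (hx : x =ᵐ[volume] -A.indicator ST)
    (hA : ENNReal.ofReal α < volume A) : (S0 : EReal) ≤ rho p (varAcc p α) S0 ST x := by
  refine le_rho_of_forall_mem fun r hr => not_lt.mp fun hlt => ?_
  rw [add_smul_mem_varAcc_iff] at hr
  have hm : r / S0 < 1 := (div_lt_one hS0).mpr hlt
  refine hr.not_gt (hA.trans_le (measure_mono_ae ?_))
  filter_upwards [hx] with ω hω hωA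
  change x ω + r / S0 * ST ω < 0
  rw [hω, Pi.neg_apply, Set.indicator_of_mem hωA]
  have hpos : 0 < ST ω := hAST hωA
  nlinarith

theorem not_continuous_rho_varAcc_of_le [IsProbabilityMeasure (volume : Measure Ω)] (hα : α < 1)
    (hS0 : 0 < S0) (hST : 0 ≤ ST)
    (h : volume {ω | 0 < ST ω} ≤ ENNReal.ofReal α) :
    ¬ Continuous (rho p (varAcc p α) S0 ST) := fun hcont => by
  refine not_continuousAt_of_forall_exists_dist_lt (x := 0) (c := 0) ?_ (fun ε hε => ?_)
    hcont.continuousAt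
  · rw [rho_varAcc_eq_bot_of_nonneg hST le_rfl h]
    exact EReal.bot_lt_zero
  refine ⟨Lp.const p volume (-(ε / 2)), ?_, rho_varAcc_nonneg_of_neg hα hS0 hST ?_⟩
  · calc dist (Lp.const p volume (-(ε / 2))) 0
        ≤ ‖-(ε / 2)‖ * (volume : Measure Ω).real Set.univ ^ (1 / p.toReal) := by
          rw [dist_zero_right]
          exact Lp.norm_const_le _ _ _
      _ = ε / 2 := by simp [abs_of_pos hε]
      _ < ε := half_lt_self hε
  · filter_upwards [Lp.coeFn_const p volume (-(ε / 2))] with ω hω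
    rw [hω, Function.const_apply]
    linarith

theorem not_continuous_rho_varAcc_of_lt [IsProbabilityMeasure (volume : Measure Ω)]
    (hna : (volume : Measure Ω).IsNonatomic) (hp : p ≠ ∞)
    (hS0 : 0 < S0) (h : ENNReal.ofReal α < volume {ω | 0 < ST ω}) :
    ¬ Continuous (rho p (varAcc p α) S0 ST) := fun hcont => by
  have hPos : MeasurableSet {ω | 0 < ST ω} :=
    measurableSet_lt measurable_const (Lp.stronglyMeasurable ST).measurable
  obtain ⟨A, hAPos, hA, hAα⟩ := hna.exists_subset_measure_eq hPos h.le
  have hmem {B : Set Ω} (hB : MeasurableSet B) : MemLp (-B.indicator ST) p volume :=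
    ((Lp.memLp ST).indicator hB).neg
  refine not_continuousAt_of_forall_exists_dist_lt (x := (hmem hA).toLp _) (c := (S0 : EReal))
    ?_ (fun ε hε => ?_) hcont.continuousAt
  · exact (rho_varAcc_le_zero_of_ae_eq_neg_indicator (MemLp.coeFn_toLp _) hAα.le).trans_lt
      (EReal.coe_pos.mpr hS0)
  have hrest : 0 < volume ({ω | 0 < ST ω} \ A) := by
    rw [measure_sdiff hAPos hA.nullMeasurableSet (measure_ne_top _ _), hAα]
    exact tsub_pos_of_lt h
  obtain ⟨B, hBrest, hB, hB0, hBnorm⟩ := hna.exists_subset_eLpNorm_indicator_le Fact.out hp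
    (Lp.memLp ST) (hPos.diff hA) hrest (half_pos hε)
  have hdisj : Disjoint A B := (Set.subset_sdiff.mp hBrest).2.symm
  refine ⟨(hmem (hA.union hB)).toLp _, ?_, le_rho_varAcc_of_ae_eq_neg_indicator hS0
    (Set.union_subset hAPos (hBrest.trans Set.sdiff_subset)) (MemLp.coeFn_toLp _) ?_⟩
  · have hdiff : -(A ∪ B).indicator ST - -A.indicator ST = -B.indicator ST := by
      rw [Set.indicator_union_of_disjoint hdisj]
      ext ω
      simp only [Pi.sub_apply, Pi.neg_apply]
      ring
    rw [dist_eq_norm, ← MemLp.toLp_sub, Lp.norm_toLp, hdiff, eLpNorm_neg]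
    exact (ENNReal.toReal_le_of_le_ofReal (half_pos hε).le hBnorm).trans_lt (half_lt_self hε)
  · rw [measure_union hdisj hB, hAα]
    exact ENNReal.lt_add_right ofReal_ne_top hB0.ne'

end RiskMeasure

theorem rho_varAcc_finite_iff_and_not_continuous_general (p : ℝ≥0∞) [Fact (1 ≤ p)] (hp : p ≠ ∞)
    (hna : ∀ s : Set Ω, MeasurableSet s → 0 < volume s →
      ∃ t ⊆ s, MeasurableSet t ∧ 0 < volume t ∧ volume t < volume s)
    (α : ℝ) (hα : α ∈ Set.Ioo (0 : ℝ) 1)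
    (S0 : ℝ) (hS0 : 0 < S0)
    (ST : Lp ℝ p (volume : Measure Ω)) (hST : 0 ≤ ST) :
    ((∀ x, rho p (varAcc (Ω := Ω) p α) S0 ST x ≠ ⊤ ∧
        rho p (varAcc (Ω := Ω) p α) S0 ST x ≠ ⊥) ↔
      volume {ω | ST ω = 0} < ENNReal.ofReal (min α (1 - α))) ∧
    ¬ Continuous (rho p (varAcc (Ω := Ω) p α) S0 ST) := by
  have hsplit : volume {ω | ST ω = 0} + volume {ω | 0 < ST ω} = 1 := by
    rw [measure_eq_zero_add_measure_pos (Lp.stronglyMeasurable ST).measurable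
      ((Lp.coeFn_nonneg ST).mpr hST), measure_univ]
  have hlevel : volume {ω | ST ω = 0} < ENNReal.ofReal (min α (1 - α)) ↔
      volume {ω | ST ω = 0} < ENNReal.ofReal α ∧ ENNReal.ofReal α < volume {ω | 0 < ST ω} := by
    rw [ENNReal.ofReal_min, lt_min_iff, ENNReal.ofReal_sub _ hα.1.le, ENNReal.ofReal_one,
      ← hsplit, lt_tsub_iff_right, ENNReal.add_lt_add_iff_left (measure_ne_top _ _)]
  refine ⟨⟨fun hfin => hlevel.mpr ⟨?_, ?_⟩, fun h x => ?_⟩, ?_⟩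
  · by_contra! hE
    obtain ⟨x, hx⟩ := exists_rho_varAcc_eq_top hna hp hα.2 hST hE
    exact (hfin x).1 hx
  · by_contra! hPos
    exact (hfin 0).2 (rho_varAcc_eq_bot_of_nonneg hST le_rfl hPos)
  · exact ⟨rho_varAcc_ne_top hS0 hST (hlevel.mp h).1 x, rho_varAcc_ne_bot hS0 (hlevel.mp h).2 x⟩
  · rcases le_or_gt (volume {ω | 0 < ST ω}) (ENNReal.ofReal α) with h | h
    · exact not_continuous_rho_varAcc_of_le hα.2 hS0 hST h
    · exact not_continuous_rho_varAcc_of_lt hna hp hS0 h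

/-- on a nonatomic probability space, the VaR-based risk measure is
finitely valued on Lᵖ iff P(S_T = 0) < min{α, 1-α}, and it is never globally
continuous. -/
theorem rho_varAcc_finite_iff_and_not_continuous (p : ℝ≥0∞) [Fact (1 ≤ p)] (hp : p ≠ ∞)
    (hna : ∀ s : Set Ω, MeasurableSet s → 0 < volume s →
      ∃ t ⊆ s, MeasurableSet t ∧ 0 < volume t ∧ volume t < volume s)
    (α : ℝ) (hα : α ∈ Set.Ioo (0 : ℝ) 1)
    (S0 : ℝ) (hS0 : 0 < S0)
    (ST : Lp ℝ p (volume : Measure Ω)) (hST : 0 ≤ ST) (hSTne : ST ≠ 0) :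
    ((∀ x, rho p (varAcc (Ω := Ω) p α) S0 ST x ≠ ⊤ ∧
        rho p (varAcc (Ω := Ω) p α) S0 ST x ≠ ⊥) ↔
      volume {ω | ST ω = 0} < ENNReal.ofReal (min α (1 - α))) ∧
    ¬ Continuous (rho p (varAcc (Ω := Ω) p α) S0 ST) :=
  rho_varAcc_finite_iff_and_not_continuous_general p hp hna α hα S0 hS0 ST hST
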